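/- arXiv:q-alg/9505013 — 2 statements merged into one kernel-verified Lean document; each statement's English description precedes it below -/
import Mathlib

section
/- Let 0 < q < 1 and r ≥ 1 an integer. For every positive integer N, the q-multiple gamma function at integer argument satisfies G_r(N+1;q) = (1-q)^{-C(N,r)} ∏_{n=1}^{N} (1-q^n)^{C(N-n, r-1)}, where G_r(z+1;q) := (1-q)^{-C(z,r)} ∏_{n=1}^{∞} ( (1-q^{z+n})/(1-q^n) )^{(-1)^r C(n+r-2, r-1)} (1-q^n)^{g_r(z,n)}. -/
/-!
Write `r = s + 1`. At a natural argument `z = N`, the Chu–Vandermonde identity collapses the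
alternating sum `g_r`:
`g_{s+1}(N, n+1) = C(N-n-1, s) - (-1)^s C(n+s, s)`, and `C(-m-1, s) = (-1)^s C(m+s, s)`.
Hence, with `b n = C(N-n-1, s) log(1 - q^(n+1))`, the logarithm of the `n`-th factor of the infinite
product is `b n - b (n+N)`. Since `b` is summable (polynomial times geometric decay), the series
telescopes to `∑_{n<N} b n`, and there `C(N-n-1, s)` is an ordinary binomial coefficient.
-/

open Finset Filter Topology

/-- Generalized binomial coefficient C(z,k) = z(z-1)⋯(z-k+1)/k!. -/
noncomputable def genBinom (z : ℂ) (k : ℕ) : ℂ :=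
  (∏ i ∈ Finset.range k, (z - i)) / (Nat.factorial k)

/-- g_r(z,n) = ∑_{m=1}^{r-1} (-1)^{m-1} C(z, r-m) C(n+m-2, m-1), with g_1 = 0. -/
noncomputable def qg (r : ℕ) (z : ℂ) (n : ℕ) : ℂ :=
  ∑ m ∈ Finset.Icc 1 (r - 1),
    (-1 : ℂ) ^ (m - 1) * genBinom z (r - m) * (Nat.choose (n + m - 2) (m - 1))

/-- The q-analogue of the multiple gamma function: `qMG q r z = G_r(z; q)`.
For `r = 0` it is the q-number `[z] = (1-q^z)/(1-q)`; for `r ≥ 1`,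
`G_r(z+1;q) = (1-q)^{-C(z,r)} ∏_{n≥1} ((1-q^{z+n})/(1-q^n))^{(-1)^r C(n+r-2,r-1)} (1-q^n)^{g_r(z,n)}`. -/
noncomputable def qMG (q : ℝ) (r : ℕ) (z : ℂ) : ℂ :=
  if r = 0 then (1 - (q : ℂ) ^ z) / (1 - (q : ℂ)) else
    (1 - (q : ℂ)) ^ (-genBinom (z - 1) r) *
      ∏' n : ℕ,
        (((1 - (q : ℂ) ^ ((z - 1) + (n + 1))) / (1 - (q : ℂ) ^ (n + 1)))
            ^ ((-1 : ℂ) ^ r * (Nat.choose (n + 1 + r - 2) (r - 1))) *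
          (1 - (q : ℂ) ^ (n + 1)) ^ (qg r (z - 1) (n + 1)))

theorem genBinom_eq_choose (z : ℂ) (k : ℕ) : genBinom z k = Ring.choose z k := by
  rw [Ring.choose_eq_smul, ← Polynomial.aeval_eq_smeval, Polynomial.aeval_def, ← Polynomial.eval_map,
    descPochhammer_map, descPochhammer_eval_eq_prod_range, genBinom, smul_eq_mul, div_eq_inv_mul]

theorem genBinom_neg_natCast_sub_one (d k : ℕ) :
    genBinom (-d - 1) k = (-1) ^ k * (d + k).choose k := by
  rw [genBinom_eq_choose, show (-d - 1 : ℂ) = -((d + 1 : ℕ) : ℂ) by push_cast; ring, Ring.choose_neg,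
    show ((d + 1 : ℕ) : ℂ) + k - 1 = ((d + k : ℕ) : ℂ) by push_cast; ring, Ring.choose_natCast,
    Units.smul_def, zsmul_eq_mul, Int.cast_negOnePow_natCast]

theorem genBinom_natCast (a b : ℕ) : genBinom a b = a.choose b := by
  rw [genBinom_eq_choose, Ring.choose_natCast]

theorem sum_neg_one_pow_mul_genBinom_mul_choose (z : ℂ) (n s : ℕ) :
    ∑ j ∈ range (s + 1), (-1) ^ j * genBinom z (s - j) * (n + j).choose j =
      genBinom (z - (n + 1)) s := by
  have hneg : ∀ j, genBinom (-(n : ℂ) - 1) j = (-1) ^ j * (n + j).choose j :=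
    genBinom_neg_natCast_sub_one n
  simp only [genBinom_eq_choose] at hneg ⊢
  rw [sub_eq_neg_add, neg_add', Ring.add_choose_eq s (Commute.all _ _),
    Nat.sum_antidiagonal_eq_sum_range_succ (fun i j => Ring.choose (-(n : ℂ) - 1) i * Ring.choose z j)]
  refine sum_congr rfl fun j _ => ?_
  rw [hneg]
  ring

theorem qg_succ_succ (s n : ℕ) (z : ℂ) :
    qg (s + 1) z (n + 1) = genBinom (z - (n + 1)) s - (-1) ^ s * (n + s).choose s := by
  rw [← sum_neg_one_pow_mul_genBinom_mul_choose, sum_range_succ, Nat.sub_self, genBinom_eq_choose z 0,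
    Ring.choose_zero_right, mul_one, add_sub_cancel_right, qg, Nat.add_sub_cancel,
    ← Ico_add_one_right_eq_Icc, sum_Ico_eq_sum_range, Nat.add_sub_cancel]
  refine sum_congr rfl fun j _ => ?_
  rw [show 1 + j - 1 = j by omega, show s + 1 - (1 + j) = s - j by omega,
    show n + 1 + (1 + j) - 2 = n + j by omega]

theorem HasSum.sub_nat_add {G : Type*} [AddCommGroup G] [TopologicalSpace G]
    [IsTopologicalAddGroup G] {f : ℕ → G} {a : G} (h : HasSum f a) (k : ℕ) :
    HasSum (fun n => f n - f (n + k)) (∑ i ∈ range k, f i) := by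
  simpa using h.sub ((hasSum_nat_add_iff' k).mpr h)

theorem Complex.ofReal_cpow_eq_exp {x : ℝ} (hx : 0 < x) (w : ℂ) :
    (x : ℂ) ^ w = Complex.exp (w * Real.log x) := by
  rw [Complex.cpow_def_of_ne_zero (by exact_mod_cast hx.ne'), ← Complex.ofReal_log hx.le, mul_comm]

theorem one_sub_pow_pos {q : ℝ} (hq : |q| < 1) {m : ℕ} (hm : m ≠ 0) : 0 < 1 - q ^ m := by
  have := pow_lt_one₀ (abs_nonneg q) hq hm
  rw [← abs_pow] at this
  linarith [le_abs_self (q ^ m)]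

theorem abs_log_one_sub_pow_le {q : ℝ} (hq : |q| < 1) (m : ℕ) :
    |Real.log (1 - q ^ (m + 1))| ≤ |q| ^ (m + 1) / (1 - |q|) := by
  have hpow : |q| ^ (m + 1) ≤ |q| := pow_le_of_le_one (abs_nonneg q) hq.le m.succ_ne_zero
  have h := Real.abs_log_sub_add_sum_range_le (x := q ^ (m + 1)) (by rw [abs_pow]; linarith) 0
  rw [sum_range_zero, zero_add, zero_add, pow_one, abs_pow] at h
  exact h.trans (div_le_div_of_nonneg_left (by positivity) (by linarith) (by linarith))

noncomputable def logFactor (q : ℝ) (N s n : ℕ) : ℂ :=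
  genBinom (N - (n + 1)) s * Real.log (1 - q ^ (n + 1))

theorem logFactor_add (q : ℝ) (N s n : ℕ) :
    logFactor q N s (n + N) = (-1) ^ s * (n + s).choose s * Real.log (1 - q ^ (n + N + 1)) := by
  rw [logFactor, ← genBinom_neg_natCast_sub_one]
  push_cast
  ring_nf

theorem summable_logFactor {q : ℝ} (hq : |q| < 1) (N s : ℕ) : Summable (logFactor q N s) := by
  rw [← summable_nat_add_iff N]
  have hgeom : Summable (fun n : ℕ => ((n + 1 : ℕ) : ℝ) ^ s * |q| ^ (n + 1)) :=
    (summable_nat_add_iff 1 (f := fun n : ℕ => (n : ℝ) ^ s * |q| ^ n)).mpr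
      (summable_pow_mul_geometric_of_norm_lt_one s (by rwa [Real.norm_eq_abs, abs_abs]))
  refine (hgeom.div_const (1 - |q|)).of_norm_bounded fun n => ?_
  have hchoose : ((n + s).choose s : ℝ) ≤ ((n + 1 : ℕ) : ℝ) ^ s := by
    exact_mod_cast Nat.choose_add_le_add_one_pow n s
  have hlog : |Real.log (1 - q ^ (n + N + 1))| ≤ |q| ^ (n + 1) / (1 - |q|) :=
    (abs_log_one_sub_pow_le hq (n + N)).trans (div_le_div_of_nonneg_right
      (pow_le_pow_of_le_one (abs_nonneg q) hq.le (by omega)) (by linarith))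
  rw [logFactor_add, norm_mul, norm_mul, norm_pow, norm_neg, norm_one, one_pow, one_mul,
    Complex.norm_natCast, Complex.norm_real, Real.norm_eq_abs, mul_div_assoc]
  exact mul_le_mul hchoose hlog (abs_nonneg _) (by positivity)

theorem factor_eq_exp_logFactor_sub {q : ℝ} (hq : |q| < 1) (N s n : ℕ) :
    ((1 - (q : ℂ) ^ ((N : ℂ) + (n + 1))) / (1 - (q : ℂ) ^ (n + 1))) ^
        ((-1 : ℂ) ^ (s + 1) * (n + s).choose s) * (1 - (q : ℂ) ^ (n + 1)) ^ qg (s + 1) N (n + 1) =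
      Complex.exp (logFactor q N s n - logFactor q N s (n + N)) := by
  have hx := one_sub_pow_pos hq (m := n + N + 1) (by omega)
  have hy := one_sub_pow_pos hq (m := n + 1) (by omega)
  have hbase : (1 : ℂ) - (q : ℂ) ^ ((N : ℂ) + (n + 1)) = ((1 - q ^ (n + N + 1) : ℝ) : ℂ) := by
    rw [show (N : ℂ) + (n + 1) = ((n + N + 1 : ℕ) : ℂ) by push_cast; ring, Complex.cpow_natCast]
    push_cast
    rfl
  rw [hbase, show (1 : ℂ) - (q : ℂ) ^ (n + 1) = ((1 - q ^ (n + 1) : ℝ) : ℂ) by push_cast; rfl,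
    ← Complex.ofReal_div, Complex.ofReal_cpow_eq_exp (div_pos hx hy),
    Complex.ofReal_cpow_eq_exp hy, ← Complex.exp_add, Real.log_div hx.ne' hy.ne', qg_succ_succ,
    logFactor_add, logFactor]
  push_cast
  ring_nf

theorem exp_sum_logFactor {q : ℝ} (hq : |q| < 1) (N s : ℕ) :
    Complex.exp (∑ n ∈ range N, logFactor q N s n) =
      ∏ n ∈ Icc 1 N, (1 - (q : ℂ) ^ n) ^ (N - n).choose s := by
  rw [Complex.exp_sum, ← Ico_add_one_right_eq_Icc, prod_Ico_eq_prod_range, Nat.add_sub_cancel]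
  refine prod_congr rfl fun n hn => ?_
  have hnN : n + 1 ≤ N := by have := mem_range.mp hn; omega
  rw [logFactor, show (N : ℂ) - (n + 1) = ((N - (n + 1) : ℕ) : ℂ) by push_cast [Nat.cast_sub hnN]; ring,
    genBinom_natCast, ← Complex.ofReal_cpow_eq_exp (one_sub_pow_pos hq n.succ_ne_zero),
    Complex.cpow_natCast, add_comm 1 n]
  push_cast
  rfl

theorem stmt4_general (q : ℝ) (hq : 0 < q) (hq1 : q < 1) (r : ℕ) (hr : 1 ≤ r) (N : ℕ) :
    qMG q r (N + 1)
      = (1 - (q : ℂ)) ^ (-(Nat.choose N r : ℤ)) *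
          ∏ n ∈ Finset.Icc 1 N, (1 - (q : ℂ) ^ n) ^ (Nat.choose (N - n) (r - 1)) := by
  obtain ⟨s, rfl⟩ : ∃ s, r = s + 1 := ⟨r - 1, by omega⟩
  have hq' : |q| < 1 := abs_lt.mpr ⟨by linarith, hq1⟩
  have hprod := ((summable_logFactor hq' N s).hasSum.sub_nat_add N).cexp
  simp only [Function.comp_def, ← factor_eq_exp_logFactor_sub hq'] at hprod
  rw [qMG, if_neg s.succ_ne_zero, add_sub_cancel_right, genBinom_natCast, Nat.add_sub_cancel]
  simp only [show ∀ n, n + 1 + (s + 1) - 2 = n + s by omega]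
  rw [hprod.tprod_eq, exp_sum_logFactor hq', ← Int.cast_natCast, ← Int.cast_neg, Complex.cpow_intCast]

theorem stmt4 (q : ℝ) (hq : 0 < q) (hq1 : q < 1) (r : ℕ) (hr : 1 ≤ r) (N : ℕ) (hN : 1 ≤ N) :
    qMG q r (N + 1)
      = (1 - (q : ℂ)) ^ (-(Nat.choose N r : ℤ)) *
          ∏ n ∈ Finset.Icc 1 N, (1 - (q : ℂ) ^ n) ^ (Nat.choose (N - n) (r - 1)) :=
  stmt4_general q hq hq1 r hr N
end

section
/- Let 0 < q < 1 and r ≥ 1. The (r+1)-st derivative of x ↦ log G_r(x+1;q) tends to 0 as x → ∞ along the positive reals. -/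
open Finset Filter Topology

/-- Real generalized binomial coefficient C(x,k) = x(x-1)⋯(x-k+1)/k!. -/
noncomputable def binomR (x : ℝ) (k : ℕ) : ℝ :=
  (∏ i ∈ Finset.range k, (x - i)) / (Nat.factorial k)

/-- Real version of g_r(x,n). -/
noncomputable def qgR (r : ℕ) (x : ℝ) (n : ℕ) : ℝ :=
  ∑ m ∈ Finset.Icc 1 (r - 1),
    (-1 : ℝ) ^ (m - 1) * binomR x (r - m) * (Nat.choose (n + m - 2) (m - 1))

/-- `logQG q r x = log G_r(x+1; q)`:
`-C(x,r) log(1-q) + ∑_{n≥1} [(-1)^r C(n+r-2,r-1) log((1-q^{x+n})/(1-q^n)) + g_r(x,n) log(1-q^n)]`. -/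
noncomputable def logQG (q : ℝ) (r : ℕ) (x : ℝ) : ℝ :=
  -(binomR x r) * Real.log (1 - q) +
    ∑' n : ℕ,
      ((-1 : ℝ) ^ r * (Nat.choose (n + 1 + r - 2) (r - 1)) *
          Real.log ((1 - q ^ (x + n + 1)) / (1 - q ^ ((n : ℝ) + 1)))
        + qgR r x (n + 1) * Real.log (1 - q ^ ((n : ℝ) + 1)))

/-!
Expanding `log (1 - q ^ (x + n + 1)) = -∑ₖ q ^ ((n + 1) (k + 1)) e ^ ((k + 1) x log q) / (k + 1)`
turns `log G_r(x + 1; q)`, for `x ≥ 0`, into a polynomial of degree at most `r` in `x` plus a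
double series `∑ a_{n,k} e ^ (b_k x)` of decaying exponentials, `b_k = (k + 1) log q < 0`.
Since `∑ |a_{n,k}| |b_k| ^ j` converges for every `j`, the series may be differentiated termwise;
the `(r + 1)`-st derivative kills the polynomial and leaves `∑ a_{n,k} b_k ^ (r + 1) e ^ (b_k x)`,
which tends to `0` by dominated convergence.
-/

open Polynomial Set

section ExpSum

variable {ι : Type*}

noncomputable def expSum (a b : ι → ℝ) (j : ℕ) (x : ℝ) : ℝ :=
  ∑' i, a i * b i ^ j * Real.exp (b i * x)

lemma abs_mul_exp_le {c β x : ℝ} (hβ : β ≤ 0) (hx : 0 ≤ x) : |c * Real.exp (β * x)| ≤ |c| := by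
  rw [abs_mul, Real.abs_exp]
  exact mul_le_of_le_one_right (abs_nonneg c)
    (Real.exp_le_one_iff.mpr (mul_nonpos_of_nonpos_of_nonneg hβ hx))

variable {a b : ι → ℝ}

lemma summable_expSum_term (hb : ∀ i, b i ≤ 0) {j : ℕ} (hs : Summable fun i => a i * b i ^ j)
    {x : ℝ} (hx : 0 ≤ x) : Summable fun i => a i * b i ^ j * Real.exp (b i * x) :=
  hs.abs.of_norm_bounded fun i => abs_mul_exp_le (hb i) hx

lemma hasDerivAt_expSum (hb : ∀ i, b i ≤ 0) {j : ℕ} (hs : Summable fun i => a i * b i ^ j)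
    (hs' : Summable fun i => a i * b i ^ (j + 1)) {x : ℝ} (hx : 0 < x) :
    HasDerivAt (expSum a b j) (expSum a b (j + 1) x) x := by
  refine hasDerivAt_tsum_of_isPreconnected (g := fun i y => a i * b i ^ j * Real.exp (b i * y))
    (g' := fun i y => a i * b i ^ (j + 1) * Real.exp (b i * y)) hs'.abs isOpen_Ioi
    isPreconnected_Ioi (fun i y _ => ?_) (fun i y hy => abs_mul_exp_le (hb i) hy.le) hx
    (summable_expSum_term hb hs hx.le) hx
  exact (((hasDerivAt_id' y).const_mul (b i)).exp.const_mul (a i * b i ^ j)).congr_deriv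
    (by ring)

lemma iteratedDeriv_eval_add_expSum (p : ℝ[X]) (hb : ∀ i, b i ≤ 0) {n : ℕ}
    (hs : ∀ j ≤ n, Summable fun i => a i * b i ^ j) {j : ℕ} (hj : j ≤ n) {x : ℝ} (hx : 0 < x) :
    iteratedDeriv j (fun y => p.eval y + expSum a b 0 y) x
      = (derivative^[j] p).eval x + expSum a b j x := by
  induction j generalizing x with
  | zero => simp
  | succ j ih =>
    have hEq : iteratedDeriv j (fun y => p.eval y + expSum a b 0 y)
        =ᶠ[𝓝 x] fun y => (derivative^[j] p).eval y + expSum a b j y :=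
      eventually_of_mem (Ioi_mem_nhds hx) fun y hy => ih (by omega) hy
    rw [iteratedDeriv_succ, hEq.deriv_eq, Function.iterate_succ_apply']
    exact ((Polynomial.hasDerivAt _ x).add
      (hasDerivAt_expSum hb (hs j (by omega)) (hs (j + 1) hj) hx)).deriv

lemma tendsto_expSum_atTop (hb : ∀ i, b i < 0) {j : ℕ} (hs : Summable fun i => a i * b i ^ j) :
    Tendsto (expSum a b j) atTop (𝓝 0) := by
  have h := tendsto_tsum_of_dominated_convergence (𝓕 := atTop)
    (f := fun x i => a i * b i ^ j * Real.exp (b i * x)) (g := fun _ => 0) hs.abs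
    (fun i => ?_) ?_
  · rwa [tsum_zero] at h
  · have : Tendsto (fun x => Real.exp (b i * x)) atTop (𝓝 0) :=
      Real.tendsto_exp_atBot.comp ((tendsto_const_mul_atBot_of_neg (hb i)).mpr tendsto_id)
    simpa using this.const_mul (a i * b i ^ j)
  · filter_upwards [eventually_ge_atTop 0] with x hx i using abs_mul_exp_le (hb i).le hx

theorem tendsto_iteratedDeriv_of_eqOn_eval_add_expSum {f : ℝ → ℝ} {p : ℝ[X]} {n : ℕ}
    (hp : p.natDegree < n) (hb : ∀ i, b i < 0) (hs : ∀ j ≤ n, Summable fun i => a i * b i ^ j)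
    (hf : EqOn f (fun x => p.eval x + expSum a b 0 x) (Ioi 0)) :
    Tendsto (iteratedDeriv n f) atTop (𝓝 0) := by
  refine (tendsto_expSum_atTop hb (hs n le_rfl)).congr' ?_
  filter_upwards [eventually_gt_atTop 0] with x hx
  rw [hf.iteratedDeriv_of_isOpen isOpen_Ioi n hx,
    iteratedDeriv_eval_add_expSum p (fun i => (hb i).le) hs le_rfl hx,
    iterate_derivative_eq_zero hp, eval_zero, zero_add]

end ExpSum

noncomputable def binomPoly (k : ℕ) : ℝ[X] :=
  C ((k.factorial : ℝ)⁻¹) * descPochhammer ℝ k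

lemma eval_binomPoly (k : ℕ) (x : ℝ) : (binomPoly k).eval x = binomR x k := by
  rw [binomPoly, eval_mul, eval_C, descPochhammer_eval_eq_prod_range, binomR, inv_mul_eq_div]

lemma natDegree_binomPoly_le (k : ℕ) : (binomPoly k).natDegree ≤ k :=
  (natDegree_C_mul_le _ _).trans (descPochhammer_natDegree ℝ k).le

noncomputable def logQGConst (q : ℝ) (m : ℕ) : ℝ :=
  ∑' n : ℕ, (Nat.choose (n + m - 1) (m - 1) : ℝ) * Real.log (1 - q ^ ((n : ℝ) + 1))

noncomputable def logQGPoly (q : ℝ) (r : ℕ) : ℝ[X] :=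
  -C (Real.log (1 - q)) * binomPoly r
    + ∑ m ∈ Icc 1 (r - 1), C ((-1) ^ (m - 1) * logQGConst q m) * binomPoly (r - m)
    - C ((-1) ^ r * logQGConst q r)

lemma natDegree_logQGPoly_le (q : ℝ) (r : ℕ) : (logQGPoly q r).natDegree ≤ r := by
  refine (natDegree_sub_le _ _).trans (max_le ((natDegree_add_le _ _).trans (max_le ?_ ?_)) ?_)
  · exact (natDegree_mul_le_of_le (natDegree_neg_le_of_le (natDegree_C _).le)
      (natDegree_binomPoly_le r)).trans_eq (zero_add r)
  · refine natDegree_sum_le_of_forall_le _ _ fun m _ => ?_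
    exact (natDegree_C_mul_le _ _).trans ((natDegree_binomPoly_le _).trans (Nat.sub_le r m))
  · exact (natDegree_C _).trans_le (Nat.zero_le r)

noncomputable def logQGCoeff (q : ℝ) (r : ℕ) (p : ℕ × ℕ) : ℝ :=
  (-1) ^ (r + 1) * (Nat.choose (p.1 + r - 1) (r - 1) : ℝ) * q ^ ((p.1 + 1) * (p.2 + 1))
    / (p.2 + 1)

noncomputable def logQGRate (q : ℝ) (p : ℕ × ℕ) : ℝ :=
  (p.2 + 1) * Real.log q

lemma qgR_succ (r : ℕ) (x : ℝ) (n : ℕ) :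
    qgR r x (n + 1)
      = ∑ m ∈ Icc 1 (r - 1),
          (-1) ^ (m - 1) * binomR x (r - m) * (Nat.choose (n + m - 1) (m - 1) : ℝ) :=
  sum_congr rfl fun m hm => by
    rw [show n + 1 + m - 2 = n + m - 1 by have := (mem_Icc.mp hm).1; omega]

section

variable {q : ℝ}

lemma logQGRate_neg (hq : 0 < q) (hq1 : q < 1) (p : ℕ × ℕ) : logQGRate q p < 0 :=
  mul_neg_of_pos_of_neg (by positivity) (Real.log_neg hq hq1)

lemma summable_logQGCoeff_mul_pow (hq : 0 < q) (hq1 : q < 1) {r : ℕ} (hr : 1 ≤ r) (j : ℕ) :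
    Summable fun p => logQGCoeff q r p * logQGRate q p ^ j := by
  have hq' : ‖q‖ < 1 := by rwa [Real.norm_of_nonneg hq.le]
  have hrow : Summable fun n : ℕ => ((n + (r - 1)).choose (r - 1) : ℝ) * q ^ n :=
    summable_choose_mul_geometric_of_norm_lt_one (r - 1) hq'
  have hcol : Summable fun k : ℕ => ((k + 1 : ℕ) : ℝ) ^ j * q ^ (k + 1) :=
    (summable_pow_mul_geometric_of_norm_lt_one j hq').comp_injective (add_left_injective 1)
  have hprod := (hrow.mul_of_nonneg hcol (fun _ => by positivity)
    (fun _ => by positivity)).mul_right (|Real.log q| ^ j)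
  refine hprod.of_norm_bounded fun ⟨n, k⟩ => ?_
  have hk : (0 : ℝ) < k + 1 := by positivity
  have hcoeff : |logQGCoeff q r (n, k)| ≤ (n + (r - 1)).choose (r - 1) * q ^ n * q ^ (k + 1) := by
    have hexp : q ^ ((n + 1) * (k + 1)) ≤ q ^ n * q ^ (k + 1) := by
      rw [← pow_add]
      exact pow_le_pow_of_le_one hq.le hq1.le (by nlinarith)
    rw [logQGCoeff, abs_div, abs_mul, abs_mul, abs_pow, abs_neg, abs_one, one_pow, one_mul,
      Nat.abs_cast, abs_pow, abs_of_pos hq, abs_of_pos hk, show n + r - 1 = n + (r - 1) by omega,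
      mul_assoc]
    exact (div_le_self (by positivity) (by linarith)).trans (by gcongr)
  rw [Real.norm_eq_abs, abs_mul, abs_pow, logQGRate, abs_mul, abs_of_pos hk, mul_pow]
  calc |logQGCoeff q r (n, k)| * (((k : ℝ) + 1) ^ j * |Real.log q| ^ j)
      ≤ (n + (r - 1)).choose (r - 1) * q ^ n * q ^ (k + 1)
          * (((k : ℝ) + 1) ^ j * |Real.log q| ^ j) := by gcongr
    _ = _ := by push_cast; ring

lemma hasSum_log_one_sub_rpow (hq : 0 < q) (hq1 : q < 1) {x : ℝ} (hx : 0 ≤ x) (n : ℕ) :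
    HasSum (fun k : ℕ => -(q ^ ((n + 1) * (k + 1)) / ((k : ℝ) + 1))
        * Real.exp (((k : ℝ) + 1) * Real.log q * x))
      (Real.log (1 - q ^ (x + n + 1))) := by
  set t := q ^ (x + n + 1) with ht
  have ht0 : 0 < t := Real.rpow_pos_of_pos hq _
  have ht1 : t < 1 := Real.rpow_lt_one hq.le hq1 (by positivity)
  have h := (Real.hasSum_pow_div_log_of_abs_lt_one (x := t)
    (by rw [abs_of_pos ht0]; exact ht1)).neg
  rw [neg_neg] at h
  refine h.congr_fun fun k => ?_
  have hpow : t ^ (k + 1) = q ^ (((n + 1) * (k + 1) : ℕ) : ℝ) * q ^ (x * ((k : ℝ) + 1)) := by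
    rw [ht, ← Real.rpow_natCast (q ^ (x + n + 1)) (k + 1), ← Real.rpow_mul hq.le,
      ← Real.rpow_add hq]
    congr 1
    push_cast
    ring
  rw [hpow, Real.rpow_natCast, Real.rpow_def_of_pos hq]
  rw [show Real.log q * (x * ((k : ℝ) + 1)) = ((k : ℝ) + 1) * Real.log q * x by ring]
  ring

lemma hasSum_choose_mul_log_one_sub_rpow (hq : 0 < q) (hq1 : q < 1) {r : ℕ} (hr : 1 ≤ r)
    {x : ℝ} (hx : 0 ≤ x) :
    HasSum (fun n : ℕ => (-1) ^ r * (Nat.choose (n + r - 1) (r - 1) : ℝ)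
        * Real.log (1 - q ^ (x + n + 1)))
      (expSum (logQGCoeff q r) (logQGRate q) 0 x) :=
  (summable_expSum_term (fun p => (logQGRate_neg hq hq1 p).le)
    (summable_logQGCoeff_mul_pow hq hq1 hr 0) hx).hasSum.prod_fiberwise fun n =>
    ((hasSum_log_one_sub_rpow hq hq1 hx n).mul_left _).congr_fun fun k => by
      simp only [logQGCoeff, logQGRate, pow_zero, mul_one]
      ring

lemma hasSum_logQGConst (hq : 0 < q) (hq1 : q < 1) {m : ℕ} (hm : 1 ≤ m) :
    HasSum (fun n : ℕ => (Nat.choose (n + m - 1) (m - 1) : ℝ) * Real.log (1 - q ^ ((n : ℝ) + 1)))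
      (logQGConst q m) := by
  have h := (hasSum_choose_mul_log_one_sub_rpow hq hq1 hm le_rfl).summable
  simp only [zero_add, mul_assoc] at h
  exact ((summable_mul_left_iff (pow_ne_zero _ (by norm_num))).mp h).hasSum

lemma logQG_eq (hq : 0 < q) (hq1 : q < 1) {r : ℕ} (hr : 1 ≤ r) {x : ℝ} (hx : 0 ≤ x) :
    logQG q r x = (logQGPoly q r).eval x + expSum (logQGCoeff q r) (logQGRate q) 0 x := by
  have hsum := ((hasSum_choose_mul_log_one_sub_rpow hq hq1 hr hx).add
    (hasSum_sum (s := Icc 1 (r - 1)) fun m hm => (hasSum_logQGConst hq hq1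
      (mem_Icc.mp hm).1).mul_left ((-1) ^ (m - 1) * binomR x (r - m)))).sub
    ((hasSum_logQGConst hq hq1 hr).mul_left ((-1) ^ r))
  have hterm : ∀ n : ℕ,
      (-1) ^ r * (Nat.choose (n + 1 + r - 2) (r - 1) : ℝ)
          * Real.log ((1 - q ^ (x + n + 1)) / (1 - q ^ ((n : ℝ) + 1)))
        + qgR r x (n + 1) * Real.log (1 - q ^ ((n : ℝ) + 1))
      = (-1) ^ r * (Nat.choose (n + r - 1) (r - 1) : ℝ) * Real.log (1 - q ^ (x + n + 1))
        + ∑ m ∈ Icc 1 (r - 1), (-1) ^ (m - 1) * binomR x (r - m)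
            * ((Nat.choose (n + m - 1) (m - 1) : ℝ) * Real.log (1 - q ^ ((n : ℝ) + 1)))
        - (-1) ^ r
            * ((Nat.choose (n + r - 1) (r - 1) : ℝ) * Real.log (1 - q ^ ((n : ℝ) + 1))) := by
    intro n
    have h1 : 0 < 1 - q ^ (x + n + 1) := sub_pos.mpr (Real.rpow_lt_one hq.le hq1 (by positivity))
    have h2 : 0 < 1 - q ^ ((n : ℝ) + 1) :=
      sub_pos.mpr (Real.rpow_lt_one hq.le hq1 (by positivity))
    rw [Real.log_div h1.ne' h2.ne', qgR_succ, sum_mul, show n + 1 + r - 2 = n + r - 1 by omega]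
    simp only [mul_assoc]
    ring
  rw [logQG, tsum_congr hterm, hsum.tsum_eq]
  simp only [logQGPoly, eval_sub, eval_add, eval_mul, eval_neg, eval_C, eval_finsetSum,
    eval_binomPoly, mul_right_comm _ (logQGConst q _)]
  ring

end

theorem stmt9 (q : ℝ) (hq : 0 < q) (hq1 : q < 1) (r : ℕ) (hr : 1 ≤ r) :
    Tendsto (fun x : ℝ => iteratedDeriv (r + 1) (logQG q r) x) atTop (𝓝 0) :=
  tendsto_iteratedDeriv_of_eqOn_eval_add_expSum (Nat.lt_succ_of_le (natDegree_logQGPoly_le q r))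
    (logQGRate_neg hq hq1) (fun j _ => summable_logQGCoeff_mul_pow hq hq1 hr j)
    fun _ hx => logQG_eq hq hq1 hr hx.le
end
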